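/- arXiv:1903.08154 — 3 statements merged into one kernel-verified Lean document; each statement's English description precedes it below -/
import Mathlib

section
/- For K ≥ 0 let f_K be the normalized Rician fading density. Let X and Y be independent real-valued random variables on a probability space, with X exponentially distributed with rate 1 (density e^{-x} on [0,∞)) and Y having density f_{K_I} for some K_I ≥ 0. Let β_m > 0, β_I > 0, γ_t > 0 and N_0 ≥ 0. Then ℙ( β_m·X / (β_I·Y + N_0) < γ_t ) = 1 − (β_m/(2·γ_t·β_I + β_m))·exp( −γ_t·N_0/β_m − 2·γ_t·K_I·β_I/(2·γ_t·β_I + β_m) ). (Theorem 1, Case 3: NLoS main link and LoS interference link.) -/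
open MeasureTheory ProbabilityTheory Real Filter

/-- Modified Bessel function of the first kind of order zero. -/
noncomputable def besselI0 (x : ℝ) : ℝ :=
  ∑' n : ℕ, (x / 2) ^ (2 * n) / ((Nat.factorial n : ℝ)) ^ 2

/-- Normalized Rician (noncentral chi-squared, 2 d.o.f., noncentrality 2K) fading density. -/
noncomputable def ricianPdf (K : ℝ) (h : ℝ) : ℝ :=
  if h < 0 then 0
  else (1 / 2) * Real.exp (-K - h / 2) * ∑' n : ℕ, (K * h / 2) ^ n / ((Nat.factorial n : ℝ)) ^ 2

/-- Density of the exponential distribution with rate 1 (supported on [0,∞)). -/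
noncomputable def expPdf (x : ℝ) : ℝ := if x < 0 then 0 else Real.exp (-x)

/-- First-order Marcum Q-function. -/
noncomputable def marcumQ (a b : ℝ) : ℝ :=
  ∫ x in Set.Ioi b, x * Real.exp (-(x ^ 2 + a ^ 2) / 2) * besselI0 (a * x)

section Aux

lemma fact_one_le (n : ℕ) : (1:ℝ) ≤ (Nat.factorial n : ℝ) := by
  exact_mod_cast Nat.one_le_iff_ne_zero.mpr (Nat.factorial_ne_zero n)

lemma summable_aux (x : ℝ) (hx : 0 ≤ x) :
    Summable (fun n : ℕ => x ^ n / ((Nat.factorial n : ℝ)) ^ 2) := by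
  refine Summable.of_nonneg_of_le (fun n => by positivity) (fun n => ?_)
    (Real.summable_pow_div_factorial x)
  have h := fact_one_le n
  have h2 : (Nat.factorial n : ℝ) ≤ ((Nat.factorial n : ℝ)) ^ 2 := by nlinarith
  exact div_le_div_of_nonneg_left (by positivity) (by linarith) h2

lemma summable_aux2 (x : ℝ) :
    Summable (fun n : ℕ => x ^ n / ((Nat.factorial n : ℝ)) ^ 2) := by
  refine Summable.of_abs ((summable_aux |x| (abs_nonneg x)).congr fun n => ?_)
  rw [abs_div, abs_pow, abs_pow, Nat.abs_cast]

lemma tsum_exp_aux (x : ℝ) : ∑' n : ℕ, x ^ n / (Nat.factorial n : ℝ) = Real.exp x := by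
  rw [Real.exp_eq_exp_ℝ, NormedSpace.exp_eq_tsum_div]

lemma integral_pow_exp_aux {a : ℝ} (ha : 0 < a) (n : ℕ) :
    ∫ t in Set.Ioi (0:ℝ), t ^ n * Real.exp (-(a * t))
      = (Nat.factorial n : ℝ) / a ^ (n + 1) := by
  have h := integral_rpow_mul_exp_neg_mul_Ioi (a := (n : ℝ) + 1) (r := a)
    (by positivity) ha
  rw [show ((n : ℝ) + 1 - 1) = (n : ℝ) by ring] at h
  rw [← setIntegral_congr_fun measurableSet_Ioi
    (fun t (ht : t ∈ Set.Ioi (0:ℝ)) => by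
      rw [← Real.rpow_natCast t n]), h, Real.Gamma_nat_eq_factorial,
    show ((n : ℝ) + 1) = ((n + 1 : ℕ) : ℝ) by push_cast; ring, Real.rpow_natCast]
  field_simp
  rw [← mul_pow, one_div, inv_mul_cancel₀ ha.ne', one_pow]

lemma integrableOn_pow_exp_aux {a : ℝ} (ha : 0 < a) (n : ℕ) :
    IntegrableOn (fun t : ℝ => t ^ n * Real.exp (-(a * t))) (Set.Ioi 0) := by
  have h := integrableOn_rpow_mul_exp_neg_mul_rpow (s := (n:ℝ)) (p := 1) (b := a)
    (lt_of_lt_of_le neg_one_lt_zero (Nat.cast_nonneg n)) zero_lt_one ha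
  refine h.congr_fun (fun t ht => ?_) measurableSet_Ioi
  beta_reduce
  rw [Real.rpow_one, Real.rpow_natCast, neg_mul]

lemma ae_ne_zero : ∀ᵐ y : ℝ, y ≠ 0 := by
  rw [ae_iff]
  simp only [ne_eq, not_not]
  rw [show {y : ℝ | y = 0} = {0} by ext y; simp]
  exact measure_singleton 0

lemma ricianPdf_of_neg {K h : ℝ} (hh : h < 0) : ricianPdf K h = 0 := if_pos hh

lemma ricianPdf_nonneg {K : ℝ} (hK : 0 ≤ K) (h : ℝ) : 0 ≤ ricianPdf K h := by
  rw [ricianPdf]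
  split_ifs with hh
  · exact le_refl 0
  · push_neg at hh
    have h1 : 0 ≤ ∑' n : ℕ, (K * h / 2) ^ n / ((Nat.factorial n : ℝ)) ^ 2 :=
      tsum_nonneg fun n => by positivity
    have h2 := (Real.exp_pos (-K - h / 2)).le
    nlinarith

lemma measurable_ricianPdf (K : ℝ) : Measurable (ricianPdf K) := by
  have hS : Measurable (fun h : ℝ => ∑' n : ℕ, (K * h / 2) ^ n / ((Nat.factorial n : ℝ)) ^ 2) := by
    refine measurable_of_tendsto_metrizable' Filter.atTop
      (f := fun N (h : ℝ) => ∑ n ∈ Finset.range N, (K * h / 2) ^ n / ((Nat.factorial n : ℝ)) ^ 2)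
      (fun N => by fun_prop) ?_
    rw [tendsto_pi_nhds]
    intro h
    exact ((summable_aux2 (K * h / 2)).hasSum).tendsto_sum_nat
  unfold ricianPdf
  exact Measurable.ite (measurableSet_lt measurable_id measurable_const) measurable_const
    ((by fun_prop : Measurable (fun h : ℝ => (1 / 2) * Real.exp (-K - h / 2))).mul hS)

lemma expCDF_aux {t : ℝ} (ht : 0 ≤ t) :
    (volume.withDensity fun x => ENNReal.ofReal (expPdf x)) (Set.Iio t)
      = ENNReal.ofReal (1 - Real.exp (-t)) := by
  rw [withDensity_apply _ measurableSet_Iio]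
  have h1 : ∀ x : ℝ, ENNReal.ofReal (expPdf x) = exponentialPDF 1 x := by
    intro x
    rw [exponentialPDF_eq, expPdf]
    rcases lt_or_ge x 0 with h | h
    · rw [if_pos h, if_neg (not_le.2 h)]
    · rw [if_neg (not_lt.2 h), if_pos h, one_mul, one_mul]
  simp only [h1]
  rw [setLIntegral_congr (Iio_ae_eq_Iic (a := t)),
    lintegral_exponentialPDF_eq_antiDeriv one_pos t, if_pos ht]
  norm_num

lemma mgf_aux (K c : ℝ) (hK : 0 ≤ K) (hc : 0 < c) :
    ∫⁻ y : ℝ, ENNReal.ofReal (Real.exp (-(c * y)) * ricianPdf K y)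
      = ENNReal.ofReal ((1 / (1 + 2 * c)) * Real.exp (-(2 * K * c / (1 + 2 * c)))) := by
  set a : ℝ := 1 / 2 + c with ha_def
  have ha : 0 < a := by positivity
  set C : ℕ → ℝ := fun n => 1 / 2 * Real.exp (-K) * (K / 2) ^ n / ((Nat.factorial n : ℝ)) ^ 2
    with hC_def
  have hCnonneg : ∀ n, 0 ≤ C n := fun n => by positivity
  -- Step A : reduce to Ioi 0
  have hne : ∀ᵐ y : ℝ, y ≠ 0 := by
    rw [ae_iff]
    simp only [ne_eq, not_not]
    rw [show {y : ℝ | y = 0} = {0} by ext y; simp]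
    exact measure_singleton 0
  have h0 : ∫⁻ y : ℝ, ENNReal.ofReal (Real.exp (-(c * y)) * ricianPdf K y)
      = ∫⁻ y in Set.Ioi (0:ℝ), ENNReal.ofReal (Real.exp (-(c * y)) * ricianPdf K y) := by
    rw [← lintegral_indicator measurableSet_Ioi]
    refine lintegral_congr_ae ?_
    filter_upwards [hne] with y hy
    rcases lt_or_gt_of_ne hy with h | h
    · rw [Set.indicator_of_notMem (by simp [Set.mem_Ioi]; linarith)]
      rw [ricianPdf, if_pos h, mul_zero, ENNReal.ofReal_zero]
    · exact (Set.indicator_of_mem h (fun y => ENNReal.ofReal (Real.exp (-(c * y)) * ricianPdf K y))).symm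
  -- Step B : pointwise series expansion
  have hpt : ∀ y ∈ Set.Ioi (0:ℝ),
      ENNReal.ofReal (Real.exp (-(c * y)) * ricianPdf K y)
        = ∑' n : ℕ, ENNReal.ofReal (C n * (y ^ n * Real.exp (-(a * y)))) := by
    intro y hy
    have hy0 : (0:ℝ) < y := hy
    have hexp : Real.exp (-K) * Real.exp (-(a * y))
        = Real.exp (-(c * y)) * Real.exp (-K - y / 2) := by
      rw [← Real.exp_add, ← Real.exp_add]; congr 1; rw [ha_def]; ring
    have hterm : ∀ n : ℕ, C n * (y ^ n * Real.exp (-(a * y)))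
        = (Real.exp (-(c * y)) * (1 / 2 * Real.exp (-K - y / 2)))
          * ((K * y / 2) ^ n / ((Nat.factorial n : ℝ)) ^ 2) := by
      intro n
      have hpow : (K * y / 2) ^ n = (K / 2) ^ n * y ^ n := by
        rw [← mul_pow]; congr 1; ring
      calc C n * (y ^ n * Real.exp (-(a * y)))
          = (Real.exp (-K) * Real.exp (-(a * y)))
            * (1 / 2 * ((K / 2) ^ n * y ^ n) / ((Nat.factorial n : ℝ)) ^ 2) := by
            rw [hC_def]; ring
        _ = (Real.exp (-(c * y)) * Real.exp (-K - y / 2))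
            * (1 / 2 * ((K / 2) ^ n * y ^ n) / ((Nat.factorial n : ℝ)) ^ 2) := by
            rw [hexp]
        _ = (Real.exp (-(c * y)) * (1 / 2 * Real.exp (-K - y / 2)))
            * ((K * y / 2) ^ n / ((Nat.factorial n : ℝ)) ^ 2) := by
            rw [hpow]; ring
    have hsum2 : Summable (fun n : ℕ => C n * (y ^ n * Real.exp (-(a * y)))) :=
      ((summable_aux (K * y / 2) (by positivity)).mul_left
        (Real.exp (-(c * y)) * (1 / 2 * Real.exp (-K - y / 2)))).congr
        (fun n => (hterm n).symm)
    have hreal : Real.exp (-(c * y)) * ricianPdf K y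
        = ∑' n : ℕ, C n * (y ^ n * Real.exp (-(a * y))) := by
      rw [ricianPdf, if_neg (not_lt.2 hy0.le)]
      rw [tsum_congr hterm, tsum_mul_left]
      ring
    rw [hreal]
    exact ENNReal.ofReal_tsum_of_nonneg (fun n => by positivity) hsum2
  -- Step C : swap integral and sum
  rw [h0, setLIntegral_congr_fun measurableSet_Ioi (fun y hy => hpt y hy),
    lintegral_tsum (fun n => (by fun_prop : Measurable
      (fun y : ℝ => ENNReal.ofReal (C n * (y ^ n * Real.exp (-(a * y)))))).aemeasurable)]
  -- Step D : evaluate each integral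
  have hint : ∀ n : ℕ, ∫⁻ y in Set.Ioi (0:ℝ),
      ENNReal.ofReal (C n * (y ^ n * Real.exp (-(a * y))))
        = ENNReal.ofReal (C n * ((Nat.factorial n : ℝ) / a ^ (n + 1))) := by
    intro n
    rw [← ofReal_integral_eq_lintegral_ofReal
      (((integrableOn_pow_exp_aux ha n).const_mul (C n)))
      ((ae_restrict_iff' measurableSet_Ioi).2 (Filter.Eventually.of_forall
        (fun y hy => by
          have hy0 : (0:ℝ) < y := hy
          have := hCnonneg n
          positivity)))]
    rw [MeasureTheory.integral_const_mul, integral_pow_exp_aux ha n]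
  rw [tsum_congr hint]
  -- Step E : sum the series
  have h2a : 2 * a = 1 + 2 * c := by rw [ha_def]; ring
  have h2a0 : (1 : ℝ) + 2 * c ≠ 0 := by positivity
  have hfac0 : ∀ n : ℕ, ((Nat.factorial n : ℝ)) ≠ 0 := fun n => by
    have := fact_one_le n; linarith
  have hval : ∀ n : ℕ, C n * ((Nat.factorial n : ℝ) / a ^ (n + 1))
      = (Real.exp (-K) / (2 * a)) * ((K / (2 * a)) ^ n / (Nat.factorial n : ℝ)) := by
    intro n
    rw [hC_def]
    simp only []
    rw [div_pow, div_pow, mul_pow, pow_succ]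
    have hfne := hfac0 n
    have hane : a ≠ 0 := ne_of_gt ha
    field_simp
    ring
  have hsum3 : Summable (fun n : ℕ => C n * ((Nat.factorial n : ℝ) / a ^ (n + 1))) :=
    ((Real.summable_pow_div_factorial (K / (2 * a))).mul_left
      (Real.exp (-K) / (2 * a))).congr (fun n => (hval n).symm)
  rw [← ENNReal.ofReal_tsum_of_nonneg (fun n => by
      have := hCnonneg n; positivity) hsum3]
  congr 1
  rw [tsum_congr hval, tsum_mul_left, tsum_exp_aux, h2a, div_mul_eq_mul_div, ← Real.exp_add,
    show -K + K / (1 + 2 * c) = -(2 * K * c / (1 + 2 * c)) by field_simp; ring]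
  ring

end Aux

theorem outage_NLoS_LoS
    {Ω : Type*} [MeasureSpace Ω] [IsProbabilityMeasure (ℙ : Measure Ω)]
    (X Y : Ω → ℝ) (hX : Measurable X) (hY : Measurable Y)
    (hXY : IndepFun X Y ℙ)
    (KI : ℝ) (hKI : 0 ≤ KI)
    (hXd : Measure.map X ℙ = volume.withDensity fun x => ENNReal.ofReal (expPdf x))
    (hYd : Measure.map Y ℙ = volume.withDensity fun x => ENNReal.ofReal (ricianPdf KI x))
    (βm βI γt N₀ : ℝ) (hβm : 0 < βm) (hβI : 0 < βI) (hγt : 0 < γt) (hN₀ : 0 ≤ N₀) :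
    (ℙ {ω | βm * X ω / (βI * Y ω + N₀) < γt}).toReal
      = 1 - (βm / (2 * γt * βI + βm)) *
          Real.exp (-(γt * N₀) / βm - 2 * γt * KI * βI / (2 * γt * βI + βm)) := by
  set c : ℝ := γt * βI / βm with hc_def
  have hc : 0 < c := by positivity
  haveI : IsProbabilityMeasure (Measure.map X ℙ) := Measure.isProbabilityMeasure_map hX.aemeasurable
  haveI : IsProbabilityMeasure (Measure.map Y ℙ) := Measure.isProbabilityMeasure_map hY.aemeasurable
  set S : Set (ℝ × ℝ) := {p | βm * p.1 / (βI * p.2 + N₀) < γt} with hS_def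
  have hSm : MeasurableSet S := by
    have hm : Measurable (fun p : ℝ × ℝ => βm * p.1 / (βI * p.2 + N₀)) := by fun_prop
    exact measurableSet_lt hm measurable_const
  have hmap : Measure.map (fun ω => (X ω, Y ω)) ℙ = (Measure.map X ℙ).prod (Measure.map Y ℙ) :=
    (indepFun_iff_map_prod_eq_prod_map_map hX.aemeasurable hY.aemeasurable).mp hXY
  have hP : ℙ {ω | βm * X ω / (βI * Y ω + N₀) < γt}
      = ∫⁻ y, (Measure.map X ℙ) ((fun x => (x, y)) ⁻¹' S) ∂(Measure.map Y ℙ) := by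
    rw [show {ω | βm * X ω / (βI * Y ω + N₀) < γt} = (fun ω => (X ω, Y ω)) ⁻¹' S from rfl,
      ← Measure.map_apply (hX.prodMk hY) hSm, hmap, Measure.prod_apply_symm hSm]
  -- a.e. positivity of Y
  have haeY : ∀ᵐ y ∂(Measure.map Y ℙ), 0 < y := by
    rw [ae_iff]
    have hs : {y : ℝ | ¬ 0 < y} = Set.Iic 0 := by ext y; simp
    rw [hs, hYd, withDensity_apply _ measurableSet_Iic]
    have h1 : ∀ᵐ y ∂(volume.restrict (Set.Iic (0:ℝ))), ENNReal.ofReal (ricianPdf KI y) = 0 := by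
      filter_upwards [ae_restrict_mem measurableSet_Iic, ae_restrict_of_ae ae_ne_zero]
        with y hy hy0
      rw [ricianPdf, if_pos (lt_of_le_of_ne hy hy0), ENNReal.ofReal_zero]
    rw [lintegral_congr_ae h1, lintegral_zero]
  -- slice computation
  have hslice : ∀ᵐ y ∂(Measure.map Y ℙ), (Measure.map X ℙ) ((fun x => (x, y)) ⁻¹' S)
      = ENNReal.ofReal (1 - Real.exp (-(γt * (βI * y + N₀) / βm))) := by
    filter_upwards [haeY] with y hy
    have hd : 0 < βI * y + N₀ := by positivity
    have hset : ((fun x => (x, y)) ⁻¹' S) = Set.Iio (γt * (βI * y + N₀) / βm) := by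
      ext x
      simp only [hS_def, Set.mem_preimage, Set.mem_setOf_eq, Set.mem_Iio]
      rw [div_lt_iff₀ hd, lt_div_iff₀ hβm]
      constructor <;> intro h <;> linarith [h]
    rw [hset, hXd, expCDF_aux (by positivity)]
  rw [hP, lintegral_congr_ae hslice, hYd,
    lintegral_withDensity_eq_lintegral_mul volume (measurable_ricianPdf KI).ennreal_ofReal
      (by fun_prop)]
  -- pointwise split into F - G
  have hclaim : ∀ y : ℝ,
      ((fun y => ENNReal.ofReal (ricianPdf KI y)) *
        (fun y => ENNReal.ofReal (1 - Real.exp (-(γt * (βI * y + N₀) / βm))))) y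
      = ENNReal.ofReal (ricianPdf KI y)
        - ENNReal.ofReal (Real.exp (-(γt * N₀ / βm)) * (Real.exp (-(c * y)) * ricianPdf KI y)) := by
    intro y
    simp only [Pi.mul_apply]
    have hrnn := ricianPdf_nonneg hKI y
    by_cases hy : 0 ≤ y
    · have hesplit : Real.exp (-(γt * (βI * y + N₀) / βm))
          = Real.exp (-(γt * N₀ / βm)) * Real.exp (-(c * y)) := by
        rw [← Real.exp_add]
        congr 1
        rw [hc_def]
        field_simp
        ring
      rw [ENNReal.ofReal_sub _ (Real.exp_pos _).le, ENNReal.ofReal_one,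
        ENNReal.mul_sub (fun _ _ => ENNReal.ofReal_ne_top), mul_one]
      congr 1
      rw [← ENNReal.ofReal_mul hrnn, hesplit]
      congr 1
      ring
    · push_neg at hy
      rw [ricianPdf_of_neg hy]
      simp
  rw [lintegral_congr hclaim]
  -- G : measurable, finite integral, dominated by F
  have hGm : Measurable (fun y : ℝ =>
      ENNReal.ofReal (Real.exp (-(γt * N₀ / βm)) * (Real.exp (-(c * y)) * ricianPdf KI y))) := by
    refine Measurable.ennreal_ofReal ?_
    exact (measurable_const.mul
      (((by fun_prop : Measurable (fun y : ℝ => Real.exp (-(c * y)))).mul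
        (measurable_ricianPdf KI))))
  have hG : ∫⁻ y, ENNReal.ofReal
        (Real.exp (-(γt * N₀ / βm)) * (Real.exp (-(c * y)) * ricianPdf KI y))
      = ENNReal.ofReal (Real.exp (-(γt * N₀ / βm))
          * ((1 / (1 + 2 * c)) * Real.exp (-(2 * KI * c / (1 + 2 * c))))) := by
    have h1 : ∀ y : ℝ, ENNReal.ofReal
          (Real.exp (-(γt * N₀ / βm)) * (Real.exp (-(c * y)) * ricianPdf KI y))
        = ENNReal.ofReal (Real.exp (-(γt * N₀ / βm)))
          * ENNReal.ofReal (Real.exp (-(c * y)) * ricianPdf KI y) := fun y =>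
      ENNReal.ofReal_mul (Real.exp_pos _).le
    simp only [h1]
    rw [lintegral_const_mul' _ _ ENNReal.ofReal_ne_top, mgf_aux KI c hKI hc,
      ← ENNReal.ofReal_mul (Real.exp_pos _).le]
  have hGle : (fun y : ℝ => ENNReal.ofReal
        (Real.exp (-(γt * N₀ / βm)) * (Real.exp (-(c * y)) * ricianPdf KI y)))
      ≤ᵐ[volume] fun y => ENNReal.ofReal (ricianPdf KI y) := by
    refine Filter.Eventually.of_forall fun y => ?_
    dsimp only
    have hrnn := ricianPdf_nonneg hKI y
    by_cases hy : 0 ≤ y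
    · refine ENNReal.ofReal_le_ofReal ?_
      have h1 : Real.exp (-(γt * N₀ / βm)) ≤ 1 :=
        Real.exp_le_one_iff.2 (neg_nonpos.2 (by positivity))
      have h2 : Real.exp (-(c * y)) ≤ 1 :=
        Real.exp_le_one_iff.2 (neg_nonpos.2 (mul_nonneg hc.le hy))
      calc Real.exp (-(γt * N₀ / βm)) * (Real.exp (-(c * y)) * ricianPdf KI y)
          ≤ Real.exp (-(c * y)) * ricianPdf KI y :=
            mul_le_of_le_one_left (mul_nonneg (Real.exp_pos _).le hrnn) h1
        _ ≤ ricianPdf KI y := mul_le_of_le_one_left hrnn h2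
    · push_neg at hy
      rw [ricianPdf_of_neg hy]
      simp
  rw [lintegral_sub hGm (by rw [hG]; exact ENNReal.ofReal_ne_top) hGle, hG]
  have hF1 : ∫⁻ y, ENNReal.ofReal (ricianPdf KI y) = 1 := by
    have h2 : (volume.withDensity fun y => ENNReal.ofReal (ricianPdf KI y)) Set.univ = 1 := by
      rw [← hYd]
      exact measure_univ
    rwa [withDensity_apply _ MeasurableSet.univ, Measure.restrict_univ] at h2
  rw [hF1]
  -- final arithmetic
  set m : ℝ := Real.exp (-(γt * N₀ / βm))
      * ((1 / (1 + 2 * c)) * Real.exp (-(2 * KI * c / (1 + 2 * c)))) with hm_def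
  have h2c : (0:ℝ) < 1 + 2 * c := by positivity
  have hm0 : 0 ≤ m := by positivity
  have hm1 : m ≤ 1 := by
    have h1 : Real.exp (-(γt * N₀ / βm)) ≤ 1 :=
      Real.exp_le_one_iff.2 (neg_nonpos.2 (by positivity))
    have h2 : Real.exp (-(2 * KI * c / (1 + 2 * c))) ≤ 1 :=
      Real.exp_le_one_iff.2 (neg_nonpos.2 (by positivity))
    have h3 : (1:ℝ) / (1 + 2 * c) ≤ 1 := by
      rw [div_le_one h2c]; linarith
    have e2 := (Real.exp_pos (-(2 * KI * c / (1 + 2 * c)))).le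
    calc m ≤ 1 / (1 + 2 * c) * Real.exp (-(2 * KI * c / (1 + 2 * c))) :=
          mul_le_of_le_one_left (by positivity) h1
      _ ≤ 1 := mul_le_one₀ h3 e2 h2
  rw [ENNReal.toReal_sub_of_le (by exact_mod_cast ENNReal.ofReal_le_one.2 hm1) ENNReal.one_ne_top,
    ENNReal.toReal_one, ENNReal.toReal_ofReal hm0]
  congr 1
  have hden : (0:ℝ) < 2 * γt * βI + βm := by positivity
  have h1 : (1:ℝ) / (1 + 2 * c) = βm / (2 * γt * βI + βm) := by
    rw [hc_def]
    field_simp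
    ring
  have h2 : -(γt * N₀ / βm) + -(2 * KI * c / (1 + 2 * c))
      = -(γt * N₀) / βm - 2 * γt * KI * βI / (2 * γt * βI + βm) := by
    rw [hc_def]
    field_simp
    ring
  calc m = (1 / (1 + 2 * c)) * Real.exp (-(γt * N₀ / βm) + -(2 * KI * c / (1 + 2 * c))) := by
        rw [hm_def, Real.exp_add]; ring
    _ = βm / (2 * γt * βI + βm) *
        Real.exp (-(γt * N₀) / βm - 2 * γt * KI * βI / (2 * γt * βI + βm)) := by
        rw [h1, h2]
end

section
/- For K ≥ 0 let f_K be the normalized Rician fading density. Let X and Y be independent real-valued random variables, with X exponentially distributed with rate 1 (density e^{-x} on [0,∞)) and Y having density f_{K_I} for some K_I ≥ 0, and let β_m > 0, β_I > 0, γ_t > 0. Then ℙ( β_m·X < γ_t·β_I·Y ) = 1 − (β_m/(2·γ_t·β_I + β_m))·exp( −2·γ_t·K_I·β_I/(2·γ_t·β_I + β_m) ). (Lemma 1, Case 3: interference-limited outage with NLoS main and LoS interference links.) -/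
open MeasureTheory ProbabilityTheory Real Filter

open Set

namespace SirAux

lemma summable_aux (x : ℝ) :
    Summable (fun n : ℕ => x ^ n / ((Nat.factorial n : ℝ)) ^ 2) := by
  have h := Real.summable_pow_div_factorial |x|
  refine Summable.of_abs (Summable.of_nonneg_of_le (fun n => abs_nonneg _) (fun n => ?_) h)
  have h1 : (1 : ℝ) ≤ (Nat.factorial n : ℝ) := by
    exact_mod_cast Nat.one_le_iff_ne_zero.mpr (Nat.factorial_ne_zero n)
  have h2 : (Nat.factorial n : ℝ) ≤ ((Nat.factorial n : ℝ)) ^ 2 := by nlinarith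
  rw [abs_div, abs_pow, abs_pow, abs_of_nonneg (by positivity : (0:ℝ) ≤ (Nat.factorial n : ℝ))]
  exact div_le_div_of_nonneg_left (by positivity) (by positivity) h2

lemma exp_tsum (x : ℝ) : ∑' n : ℕ, x ^ n / (Nat.factorial n : ℝ) = Real.exp x := by
  rw [Real.exp_eq_exp_ℝ, NormedSpace.exp_eq_tsum_div]

lemma measurable_series (K : ℝ) :
    Measurable (fun y : ℝ => ∑' n : ℕ, (K * y / 2) ^ n / ((Nat.factorial n : ℝ)) ^ 2) := by
  apply measurable_of_tendsto_metrizable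
    (f := fun N (y : ℝ) => ∑ n ∈ Finset.range N, (K * y / 2) ^ n / ((Nat.factorial n : ℝ)) ^ 2)
  · intro N
    exact Finset.measurable_sum _ fun n _ => by fun_prop
  · rw [tendsto_pi_nhds]
    intro y
    exact (summable_aux (K * y / 2)).hasSum.tendsto_sum_nat

lemma measurable_rician (K : ℝ) : Measurable (ricianPdf K) := by
  unfold ricianPdf
  exact Measurable.ite measurableSet_Iio measurable_const
    ((measurable_const.mul (by fun_prop)).mul (measurable_series K))

lemma rician_nonneg {K : ℝ} (hK : 0 ≤ K) (y : ℝ) : 0 ≤ ricianPdf K y := by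
  unfold ricianPdf
  split
  · exact le_rfl
  · rename_i h
    push_neg at h
    have hts : 0 ≤ ∑' n : ℕ, (K * y / 2) ^ n / ((Nat.factorial n : ℝ)) ^ 2 :=
      tsum_nonneg fun n => by positivity
    have h2 : 0 ≤ (1/2 : ℝ) * Real.exp (-K - y/2) := by positivity
    exact mul_nonneg h2 hts

lemma integral_pow_exp {s : ℝ} (hs : 0 < s) (n : ℕ) :
    ∫ y in Ioi (0:ℝ), y ^ n * Real.exp (-(s * y)) = (Nat.factorial n : ℝ) / s ^ (n + 1) := by
  have h := integral_rpow_mul_exp_neg_mul_Ioi (a := (n : ℝ) + 1) (r := s) (by positivity) hs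
  have heq : ∀ y ∈ Ioi (0:ℝ),
      y ^ ((n : ℝ) + 1 - 1) * Real.exp (-(s * y)) = y ^ n * Real.exp (-(s * y)) := by
    intro y hy
    rw [add_sub_cancel_right, Real.rpow_natCast]
  rw [setIntegral_congr_fun measurableSet_Ioi heq] at h
  rw [h, Real.Gamma_nat_eq_factorial, show ((n:ℝ) + 1) = ((n + 1 : ℕ) : ℝ) by push_cast; ring,
    Real.rpow_natCast, div_pow, one_pow, div_mul_eq_mul_div, one_mul]

lemma integrableOn_pow_exp {s : ℝ} (hs : 0 < s) (n : ℕ) :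
    IntegrableOn (fun y : ℝ => y ^ n * Real.exp (-(s * y))) (Ioi 0) := by
  have h := integrableOn_rpow_mul_exp_neg_mul_rpow
    (p := 1) (s := (n : ℝ)) (b := s)
    (lt_of_lt_of_le neg_one_lt_zero (Nat.cast_nonneg n)) one_pos hs
  refine h.congr_fun (fun y hy => ?_) measurableSet_Ioi
  dsimp only
  rw [Real.rpow_one, Real.rpow_natCast, neg_mul]

lemma lintegral_pow_exp {s : ℝ} (hs : 0 < s) (n : ℕ) :
    ∫⁻ y in Ioi (0:ℝ), ENNReal.ofReal (y ^ n * Real.exp (-(s * y)))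
      = ENNReal.ofReal ((Nat.factorial n : ℝ) / s ^ (n + 1)) := by
  rw [← ofReal_integral_eq_lintegral_ofReal (integrableOn_pow_exp hs n) ?_,
    integral_pow_exp hs n]
  filter_upwards [ae_restrict_mem measurableSet_Ioi] with y hy
  have hy0 : (0:ℝ) < y := hy
  positivity

lemma key {K s : ℝ} (hK : 0 ≤ K) (hs : 0 < s) :
    ∫⁻ y in Ioi (0:ℝ), ENNReal.ofReal
        (Real.exp (-(s * y)) * ∑' n : ℕ, (K * y / 2) ^ n / ((Nat.factorial n : ℝ)) ^ 2)
      = ENNReal.ofReal (1 / s * Real.exp (K / (2 * s))) := by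
  have hpt : ∀ y ∈ Ioi (0:ℝ),
      ENNReal.ofReal (Real.exp (-(s * y)) * ∑' n : ℕ, (K * y / 2) ^ n / ((Nat.factorial n : ℝ)) ^ 2)
        = ∑' n : ℕ, ENNReal.ofReal
            ((K / 2) ^ n / ((Nat.factorial n : ℝ)) ^ 2 * (y ^ n * Real.exp (-(s * y)))) := by
    intro y hy
    have hy0 : (0:ℝ) ≤ y := le_of_lt hy
    rw [← tsum_mul_left, ENNReal.ofReal_tsum_of_nonneg (fun n => by positivity)
      ((summable_aux (K * y / 2)).mul_left _)]
    refine tsum_congr fun n => ?_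
    congr 1
    rw [show K * y / 2 = K / 2 * y by ring, mul_pow]
    ring
  rw [setLIntegral_congr_fun measurableSet_Ioi hpt,
    lintegral_tsum (fun n => (Measurable.ennreal_ofReal (by fun_prop)).aemeasurable)]
  have hterm : ∀ n : ℕ,
      (∫⁻ y in Ioi (0:ℝ), ENNReal.ofReal
        ((K / 2) ^ n / ((Nat.factorial n : ℝ)) ^ 2 * (y ^ n * Real.exp (-(s * y)))))
      = ENNReal.ofReal (1 / s * ((K / (2 * s)) ^ n / (Nat.factorial n : ℝ))) := by
    intro n
    have hc : (0:ℝ) ≤ (K / 2) ^ n / ((Nat.factorial n : ℝ)) ^ 2 := by positivity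
    simp_rw [ENNReal.ofReal_mul hc]
    rw [lintegral_const_mul _ (Measurable.ennreal_ofReal (by fun_prop)),
      lintegral_pow_exp hs n, ← ENNReal.ofReal_mul hc]
    congr 1
    have hf : (Nat.factorial n : ℝ) ≠ 0 := by positivity
    have hsne : s ≠ 0 := ne_of_gt hs
    rw [div_pow, div_pow, mul_pow]
    field_simp
    ring
  simp_rw [hterm]
  rw [← ENNReal.ofReal_tsum_of_nonneg (fun n => by positivity)
    ((Real.summable_pow_div_factorial _).mul_left _), tsum_mul_left, exp_tsum]

lemma expCdf (a : ℝ) :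
    (volume.withDensity fun x => ENNReal.ofReal (expPdf x)) (Iio a)
      = ENNReal.ofReal (1 - Real.exp (-a)) := by
  rw [withDensity_apply _ measurableSet_Iio]
  rcases le_or_gt a 0 with ha | ha
  · have h0 : ∀ x ∈ Iio a, ENNReal.ofReal (expPdf x) = (0:ENNReal) := by
      intro x hx
      have hx0 : x < 0 := lt_of_lt_of_le hx ha
      simp [expPdf, hx0]
    rw [setLIntegral_congr_fun measurableSet_Iio h0, lintegral_zero]
    have h1 : (1:ℝ) ≤ Real.exp (-a) := by
      rw [← Real.exp_zero]
      exact Real.exp_le_exp.mpr (by linarith)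
    rw [ENNReal.ofReal_eq_zero.mpr (by linarith)]
  · have hsplit : Iio a = Iio (0:ℝ) ∪ Ico 0 a := (Iio_union_Ico_eq_Iio (le_of_lt ha)).symm
    have hdisj : Disjoint (Iio (0:ℝ)) (Ico 0 a) :=
      (Set.Iio_disjoint_Ici le_rfl).mono_right Set.Ico_subset_Ici_self
    rw [hsplit, lintegral_union measurableSet_Ico hdisj]
    have h0 : ∀ x ∈ Iio (0:ℝ), ENNReal.ofReal (expPdf x) = (0:ENNReal) := by
      intro x hx
      simp [expPdf, show x < 0 from hx]
    rw [setLIntegral_congr_fun measurableSet_Iio h0, lintegral_zero,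
      zero_add]
    have h1 : ∀ x ∈ Ico (0:ℝ) a, ENNReal.ofReal (expPdf x) = ENNReal.ofReal (Real.exp (-x)) := by
      intro x hx
      rw [expPdf, if_neg (not_lt.mpr hx.1)]
    rw [setLIntegral_congr_fun measurableSet_Ico h1]
    have hint : IntegrableOn (fun x : ℝ => Real.exp (-x)) (Ico 0 a) :=
      ((Real.continuous_exp.comp continuous_neg).integrableOn_Icc).mono_set Ico_subset_Icc_self
    rw [← ofReal_integral_eq_lintegral_ofReal hint
      (MeasureTheory.ae_of_all _ fun x => (Real.exp_pos _).le)]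
    congr 1
    rw [MeasureTheory.integral_Ico_eq_integral_Ioo, ← MeasureTheory.integral_Ioc_eq_integral_Ioo,
      ← intervalIntegral.integral_of_le ha.le,
      intervalIntegral.integral_comp_neg (fun x => Real.exp x), neg_zero, integral_exp,
      Real.exp_zero]

lemma rician_lint {K r : ℝ} (hK : 0 ≤ K) (hr : 0 ≤ r) :
    ∫⁻ y in Ioi (0:ℝ), ENNReal.ofReal (ricianPdf K y * Real.exp (-(r * y)))
      = ENNReal.ofReal (1 / (2 * r + 1) * Real.exp (-(2 * r * K) / (2 * r + 1))) := by
  have hs : (0:ℝ) < r + 1/2 := by linarith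
  have hpt : ∀ y ∈ Ioi (0:ℝ),
      ENNReal.ofReal (ricianPdf K y * Real.exp (-(r * y)))
        = ENNReal.ofReal (1 / 2 * Real.exp (-K)) * ENNReal.ofReal
            (Real.exp (-((r + 1/2) * y)) *
              ∑' n : ℕ, (K * y / 2) ^ n / ((Nat.factorial n : ℝ)) ^ 2) := by
    intro y hy
    have hy0 : (0:ℝ) ≤ y := le_of_lt hy
    rw [ricianPdf, if_neg (not_lt.mpr hy0), ← ENNReal.ofReal_mul (by positivity)]
    congr 1
    rw [show -K - y/2 = -K + (-(y/2)) by ring, Real.exp_add,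
      show -((r + 1/2) * y) = -(y/2) + (-(r*y)) by ring, Real.exp_add]
    ring
  rw [setLIntegral_congr_fun measurableSet_Ioi hpt,
    lintegral_const_mul _ (Measurable.ennreal_ofReal (f := fun y : ℝ => Real.exp (-((r + 1/2) * y)) *
          ∑' n : ℕ, (K * y / 2) ^ n / ((Nat.factorial n : ℝ)) ^ 2)
      ((by fun_prop : Measurable fun y : ℝ => Real.exp (-((r + 1/2) * y))).mul
        (measurable_series K))),
    key hK hs, ← ENNReal.ofReal_mul (by positivity)]
  congr 1
  have h1 : (0:ℝ) < 2 * r + 1 := by linarith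
  rw [show (1:ℝ)/2 * Real.exp (-K) * (1/(r+1/2) * Real.exp (K / (2 * (r + 1/2))))
      = (1/2 * (1/(r+1/2))) * (Real.exp (-K) * Real.exp (K / (2 * (r + 1/2)))) by ring,
    ← Real.exp_add]
  congr 1
  · field_simp
  · rw [show (2 * (r + 1/2) : ℝ) = 2 * r + 1 by ring]
    field_simp
    ring

end SirAux

open SirAux

theorem sir_outage_NLoS_LoS
    {Ω : Type*} [MeasureSpace Ω] [IsProbabilityMeasure (ℙ : Measure Ω)]
    (X Y : Ω → ℝ) (hX : Measurable X) (hY : Measurable Y)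
    (hXY : IndepFun X Y ℙ)
    (KI : ℝ) (hKI : 0 ≤ KI)
    (hXd : Measure.map X ℙ = volume.withDensity fun x => ENNReal.ofReal (expPdf x))
    (hYd : Measure.map Y ℙ = volume.withDensity fun x => ENNReal.ofReal (ricianPdf KI x))
    (βm βI γt : ℝ) (hβm : 0 < βm) (hβI : 0 < βI) (hγt : 0 < γt) :
    (ℙ {ω | βm * X ω < γt * βI * Y ω}).toReal
      = 1 - (βm / (2 * γt * βI + βm)) *
          Real.exp (-(2 * γt * KI * βI) / (2 * γt * βI + βm)) := by
  have hden : (0:ℝ) < 2 * γt * βI + βm := by positivity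
  set c : ℝ := γt * βI / βm with hcdef
  have hc : 0 < c := by positivity
  haveI hPX : IsProbabilityMeasure (volume.withDensity fun x => ENNReal.ofReal (expPdf x)) := by
    rw [← hXd]; exact Measure.isProbabilityMeasure_map hX.aemeasurable
  haveI hPY : IsProbabilityMeasure (volume.withDensity fun x => ENNReal.ofReal (ricianPdf KI x)) := by
    rw [← hYd]; exact Measure.isProbabilityMeasure_map hY.aemeasurable
  have hS : MeasurableSet {p : ℝ × ℝ | βm * p.1 < γt * βI * p.2} :=
    measurableSet_lt (measurable_fst.const_mul βm) (measurable_snd.const_mul (γt * βI))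
  have hmap : Measure.map (fun ω => (X ω, Y ω)) ℙ
      = (volume.withDensity fun x => ENNReal.ofReal (expPdf x)).prod
          (volume.withDensity fun x => ENNReal.ofReal (ricianPdf KI x)) := by
    rw [← hXd, ← hYd]
    exact (indepFun_iff_map_prod_eq_prod_map_map hX.aemeasurable hY.aemeasurable).mp hXY
  have hPP : ℙ {ω | βm * X ω < γt * βI * Y ω}
      = ((volume.withDensity fun x => ENNReal.ofReal (expPdf x)).prod
          (volume.withDensity fun x => ENNReal.ofReal (ricianPdf KI x)))
          {p : ℝ × ℝ | βm * p.1 < γt * βI * p.2} := by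
    rw [← hmap, Measure.map_apply (hX.prodMk hY) hS]
    rfl
  rw [hPP, Measure.prod_apply_symm hS]
  have hXcdf : ∀ y : ℝ, (volume.withDensity fun x => ENNReal.ofReal (expPdf x))
      ((fun x => (x, y)) ⁻¹' {p : ℝ × ℝ | βm * p.1 < γt * βI * p.2})
      = ENNReal.ofReal (1 - Real.exp (-(c * y))) := by
    intro y
    have hpre : ((fun x => (x, y)) ⁻¹' {p : ℝ × ℝ | βm * p.1 < γt * βI * p.2})
        = Iio (γt * βI * y / βm) := by
      ext x
      simp only [mem_preimage, mem_setOf_eq, mem_Iio]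
      rw [lt_div_iff₀ hβm, mul_comm βm x]
    have hcy : γt * βI * y / βm = c * y := by rw [hcdef]; ring
    rw [hpre, expCdf, hcy]
  rw [lintegral_congr hXcdf,
    lintegral_withDensity_eq_lintegral_mul _
      (Measurable.ennreal_ofReal (measurable_rician KI))
      (Measurable.ennreal_ofReal (by fun_prop))]
  have hfun : ((fun x => ENNReal.ofReal (ricianPdf KI x)) *
        fun y => ENNReal.ofReal (1 - Real.exp (-(c * y))))
      = (Ioi (0:ℝ)).indicator (fun y =>
          ENNReal.ofReal (ricianPdf KI y) * ENNReal.ofReal (1 - Real.exp (-(c * y)))) := by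
    funext y
    simp only [Pi.mul_apply]
    rcases lt_trichotomy y 0 with h | h | h
    · rw [indicator_of_notMem (by simpa using not_lt.mpr h.le)]
      rw [ricianPdf, if_pos h]
      simp
    · subst h
      rw [indicator_of_notMem (by simp)]
      simp
    · rw [indicator_of_mem (mem_Ioi.mpr h)]
  rw [hfun, lintegral_indicator measurableSet_Ioi]
  have hsplit : ∀ y ∈ Ioi (0:ℝ),
      ENNReal.ofReal (ricianPdf KI y) * ENNReal.ofReal (1 - Real.exp (-(c * y)))
        = ENNReal.ofReal (ricianPdf KI y) - ENNReal.ofReal (ricianPdf KI y * Real.exp (-(c * y))) := by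
    intro y hy
    have hr : 0 ≤ ricianPdf KI y := rician_nonneg hKI y
    rw [← ENNReal.ofReal_mul hr, mul_sub, mul_one, ENNReal.ofReal_sub _ (by positivity)]
  rw [setLIntegral_congr_fun measurableSet_Ioi hsplit]
  have hB : ∫⁻ y in Ioi (0:ℝ), ENNReal.ofReal (ricianPdf KI y * Real.exp (-(c * y)))
      = ENNReal.ofReal (1 / (2 * c + 1) * Real.exp (-(2 * c * KI) / (2 * c + 1))) :=
    rician_lint hKI hc.le
  have hA : ∫⁻ y in Ioi (0:ℝ), ENNReal.ofReal (ricianPdf KI y) = 1 := by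
    have := rician_lint (K := KI) (r := 0) hKI le_rfl
    simp only [zero_mul, neg_zero, Real.exp_zero, mul_one, mul_zero, zero_div,
      zero_add, one_div, inv_one, one_mul] at this
    rw [this]
    exact ENNReal.ofReal_one
  have hgm : Measurable (fun y : ℝ => ENNReal.ofReal (ricianPdf KI y * Real.exp (-(c * y)))) :=
    Measurable.ennreal_ofReal ((measurable_rician KI).mul (by fun_prop))
  rw [lintegral_sub hgm (by rw [hB]; exact ENNReal.ofReal_ne_top) ?le]
  case le =>
    filter_upwards [ae_restrict_mem measurableSet_Ioi] with y hy
    apply ENNReal.ofReal_le_ofReal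
    have hy0 : (0:ℝ) ≤ y := (le_of_lt hy)
    have hexp : Real.exp (-(c * y)) ≤ 1 := by
      rw [Real.exp_le_one_iff]
      nlinarith
    exact mul_le_of_le_one_right (rician_nonneg hKI y) hexp
  rw [hA, hB]
  have hRval : 1 / (2 * c + 1) * Real.exp (-(2 * c * KI) / (2 * c + 1))
      = βm / (2 * γt * βI + βm) * Real.exp (-(2 * γt * KI * βI) / (2 * γt * βI + βm)) := by
    have h2c : (2 * c + 1 : ℝ) = (2 * γt * βI + βm) / βm := by
      rw [hcdef]; field_simp
    rw [h2c]
    congr 1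
    · field_simp
    · congr 1
      rw [hcdef]
      field_simp
  rw [hRval]
  set R : ℝ := βm / (2 * γt * βI + βm) * Real.exp (-(2 * γt * KI * βI) / (2 * γt * βI + βm))
    with hRdef
  have hR0 : 0 ≤ R := by rw [hRdef]; positivity
  have hR1 : R ≤ 1 := by
    rw [hRdef]
    apply mul_le_one₀
    · rw [div_le_one hden]; nlinarith
    · exact (Real.exp_pos _).le
    · rw [Real.exp_le_one_iff]
      apply div_nonpos_of_nonpos_of_nonneg
      · rw [neg_nonpos]; positivity
      · linarith
  rw [ENNReal.toReal_sub_of_le (ENNReal.ofReal_le_one.mpr hR1) ENNReal.one_ne_top,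
    ENNReal.toReal_one, ENNReal.toReal_ofReal hR0]
end

section
/- For K ≥ 0 let f_K be the normalized Rician fading density. Fix K_m > 0, K_I > 0 and γ_t > 0, and let X and Y be independent real-valued random variables with densities f_{K_m} and f_{K_I} respectively. Then the function v ↦ ℙ( v·X < γ_t·Y ) is strictly decreasing on (0,∞): for all 0 < v₁ < v₂ one has ℙ( v₂·X < γ_t·Y ) < ℙ( v₁·X < γ_t·Y ). -/
open MeasureTheory ProbabilityTheory Real Filter

lemma summable_rician (t : ℝ) (ht : 0 ≤ t) :
    Summable fun n : ℕ => t ^ n / ((Nat.factorial n : ℝ)) ^ 2 := by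
  refine Summable.of_nonneg_of_le (fun n => by positivity) (fun n => ?_)
    (Real.summable_pow_div_factorial t)
  have h1 : (1 : ℝ) ≤ (Nat.factorial n : ℝ) := by exact_mod_cast (Nat.factorial_pos n)
  have h2 : (0 : ℝ) < (Nat.factorial n : ℝ) := by linarith
  apply div_le_div_of_nonneg_left (pow_nonneg ht n) h2
  nlinarith

lemma one_le_tsum_rician (t : ℝ) (ht : 0 ≤ t) :
    (1 : ℝ) ≤ ∑' n : ℕ, t ^ n / ((Nat.factorial n : ℝ)) ^ 2 := by
  have := Summable.le_tsum (summable_rician t ht) 0 (fun i _ => by positivity)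
  simpa using this

lemma ricianPdf_ge (K b : ℝ) (hK : 0 ≤ K) {x : ℝ} (hx : 0 ≤ x) (hxb : x ≤ b) :
    (1 / 2) * Real.exp (-K - b / 2) ≤ ricianPdf K x := by
  rw [ricianPdf, if_neg (not_lt.2 hx)]
  have h1 : Real.exp (-K - b / 2) ≤ Real.exp (-K - x / 2) :=
    Real.exp_le_exp.2 (by linarith)
  have h2 : (1 : ℝ) ≤ ∑' n : ℕ, (K * x / 2) ^ n / ((Nat.factorial n : ℝ)) ^ 2 :=
    one_le_tsum_rician _ (by positivity)
  have h3 := (Real.exp_pos (-K - x / 2)).le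
  nlinarith

lemma rician_measure_neg (K : ℝ) :
    (volume.withDensity fun x => ENNReal.ofReal (ricianPdf K x)) (Set.Iio 0) = 0 := by
  rw [withDensity_apply _ measurableSet_Iio]
  have : ∀ x ∈ Set.Iio (0:ℝ), ENNReal.ofReal (ricianPdf K x) = 0 := by
    intro x hx
    simp [ricianPdf, if_pos (Set.mem_Iio.mp hx)]
  rw [setLIntegral_congr_fun measurableSet_Iio (fun x hx => this x hx)]
  simp

lemma rician_measure_Ioo_pos (K a b : ℝ) (hK : 0 ≤ K) (ha : 0 ≤ a) (hab : a < b) :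
    0 < (volume.withDensity fun x => ENNReal.ofReal (ricianPdf K x)) (Set.Ioo a b) := by
  rw [withDensity_apply _ measurableSet_Ioo]
  have hc : 0 < (1 / 2) * Real.exp (-K - b / 2) := by positivity
  calc (0 : ENNReal)
      < ENNReal.ofReal ((1 / 2) * Real.exp (-K - b / 2)) * volume (Set.Ioo a b) := by
        apply ENNReal.mul_pos
        · simpa using hc
        · simp [Real.volume_Ioo, ENNReal.ofReal_eq_zero, not_le, sub_pos, hab]
    _ = ∫⁻ _ in Set.Ioo a b, ENNReal.ofReal ((1 / 2) * Real.exp (-K - b / 2)) := by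
        rw [setLIntegral_const, mul_comm]
    _ ≤ ∫⁻ x in Set.Ioo a b, ENNReal.ofReal (ricianPdf K x) := by
        apply setLIntegral_mono' measurableSet_Ioo
        intro x hx
        exact ENNReal.ofReal_le_ofReal (ricianPdf_ge K b hK (ha.trans hx.1.le) hx.2.le)

theorem outage_strictAnti
    {Ω : Type*} [MeasureSpace Ω] [IsProbabilityMeasure (ℙ : Measure Ω)]
    (X Y : Ω → ℝ) (hX : Measurable X) (hY : Measurable Y)
    (hXY : IndepFun X Y ℙ)
    (Km KI γt : ℝ) (hKm : 0 < Km) (hKI : 0 < KI) (hγt : 0 < γt)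
    (hXd : Measure.map X ℙ = volume.withDensity fun x => ENNReal.ofReal (ricianPdf Km x))
    (hYd : Measure.map Y ℙ = volume.withDensity fun x => ENNReal.ofReal (ricianPdf KI x)) :
    ∀ v₁ v₂ : ℝ, 0 < v₁ → v₁ < v₂ →
      (ℙ {ω | v₂ * X ω < γt * Y ω}).toReal < (ℙ {ω | v₁ * X ω < γt * Y ω}).toReal := by
  intro v₁ v₂ hv₁ hv
  set r : ℝ := (v₁ + v₂) / 2 with hr_def
  have hr0 : 0 < r := by simp [hr_def]; linarith
  have hr1 : v₁ < r := by simp [hr_def]; linarith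
  have hr2 : r < v₂ := by simp [hr_def]; linarith
  have hrr : v₁ * v₂ < r ^ 2 := by simp [hr_def]; nlinarith
  set S₁ : Set Ω := {ω | v₁ * X ω < γt * Y ω} with hS₁_def
  set S₂ : Set Ω := {ω | v₂ * X ω < γt * Y ω} with hS₂_def
  have hS₁m : MeasurableSet S₁ := measurableSet_lt (hX.const_mul v₁) (hY.const_mul γt)
  have hS₂m : MeasurableSet S₂ := measurableSet_lt (hX.const_mul v₂) (hY.const_mul γt)
  set I : Set ℝ := Set.Ioo 1 (v₂ / r) with hI_def
  set J : Set ℝ := Set.Ioo (r / γt) (v₂ / γt) with hJ_def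
  set T : Set Ω := (fun ω => (X ω, Y ω)) ⁻¹' (I ×ˢ J) with hT_def
  have hTm : MeasurableSet T :=
    (hX.prodMk hY) (measurableSet_Ioo.prod measurableSet_Ioo)
  -- joint distribution is the product of marginals
  have hprod : Measure.map (fun ω => (X ω, Y ω)) ℙ
      = (Measure.map X ℙ).prod (Measure.map Y ℙ) :=
    (ProbabilityTheory.indepFun_iff_map_prod_eq_prod_map_map hX.aemeasurable hY.aemeasurable).mp hXY
  have hPT : ℙ T = (Measure.map X ℙ) I * (Measure.map Y ℙ) J := by
    rw [hT_def, ← Measure.map_apply (hX.prodMk hY) (measurableSet_Ioo.prod measurableSet_Ioo),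
      hprod, Measure.prod_prod]
  have hPT_pos : 0 < ℙ T := by
    rw [hPT, hXd, hYd]
    apply ENNReal.mul_pos
    · exact (rician_measure_Ioo_pos Km 1 (v₂ / r) hKm.le zero_le_one
        ((one_lt_div hr0).2 hr2)).ne'
    · exact (rician_measure_Ioo_pos KI (r / γt) (v₂ / γt) hKI.le (by positivity)
        (by gcongr)).ne'
  have hXneg : ℙ {ω | X ω < 0} = 0 := by
    have : {ω | X ω < 0} = X ⁻¹' Set.Iio 0 := rfl
    rw [this, ← Measure.map_apply hX measurableSet_Iio, hXd, rician_measure_neg]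
  -- S₂ \ S₁ is contained in {X < 0}
  have hsub : S₂ \ S₁ ⊆ {ω | X ω < 0} := by
    rintro ω ⟨h2, h1⟩
    simp only [hS₁_def, hS₂_def, Set.mem_setOf_eq, not_lt] at h2 h1 ⊢
    nlinarith
  -- T ⊆ S₁
  have hTsub : T ⊆ S₁ := by
    rintro ω ⟨⟨hx1, hx2⟩, hy1, hy2⟩
    simp only [hS₁_def, Set.mem_setOf_eq]
    have h1 : v₁ * X ω < v₁ * (v₂ / r) := mul_lt_mul_of_pos_left hx2 hv₁
    have h2 : v₁ * (v₂ / r) < r := by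
      rw [mul_div_assoc']
      rw [div_lt_iff₀ hr0]
      nlinarith
    have h3 : r < γt * Y ω := by
      have := (div_lt_iff₀ hγt).1 hy1
      nlinarith
    linarith
  -- T is disjoint from S₂
  have hTdisj : Disjoint S₂ T := by
    rw [Set.disjoint_left]
    rintro ω h2 ⟨⟨hx1, hx2⟩, hy1, hy2⟩
    simp only [hS₂_def, Set.mem_setOf_eq] at h2
    have h4 : γt * Y ω < v₂ := by
      have := (lt_div_iff₀ hγt).1 hy2
      nlinarith
    nlinarith
  have e1 : ℙ S₂ = ℙ (S₂ ∩ S₁) := by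
    have h0 : ℙ (S₂ \ S₁) = 0 := measure_mono_null hsub hXneg
    have := measure_inter_add_diff S₂ hS₁m (μ := ℙ)
    rw [h0, add_zero] at this
    exact this.symm
  have e2 : ℙ (S₂ ∩ S₁) + ℙ T ≤ ℙ S₁ := by
    rw [← measure_union (hTdisj.mono_left Set.inter_subset_left) hTm]
    exact measure_mono (Set.union_subset Set.inter_subset_right hTsub)
  have hlt : ℙ S₂ < ℙ S₁ := by
    rw [e1]
    exact lt_of_lt_of_le (ENNReal.lt_add_right (measure_ne_top ℙ _) hPT_pos.ne') e2
  exact (ENNReal.toReal_lt_toReal (measure_ne_top ℙ _) (measure_ne_top ℙ _)).mpr hlt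
end
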